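/- arXiv:2010.08703 — 3 statements merged into one kernel-verified Lean document; each statement's English description precedes it below -/
import Mathlib

section
/- Let θ̂₁, θ̂₂ ∈ ℝ, κ > 1, and positive weights τ_max, τ_min > 0. Let θ̂_max = max(|θ̂₁|,|θ̂₂|) and θ̂_min = min(|θ̂₁|,|θ̂₂|), with τ_max, τ_min the weights attached to the coordinate achieving the max and min respectively. If θ̂_max − κθ̂_min > 0, then the minimum over all (a₁,a₂) in the set {(a₁,a₂) : max(|a₁|,|a₂|) ≤ κ·min(|a₁|,|a₂|)} of τ_max⁻¹·(θ̂_max − a_max)² + τ_min⁻¹·(θ̂_min − a_min)² (where a_max, a_min are matched to the same coordinates) equals (θ̂_max − κθ̂_min)²/(τ_max + κ²τ_min). -/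
/-!
A point `a` of the null region satisfies `|a₁| ≤ κ |a₂|`, so by the triangle inequality
`M - κ m ≤ |M - a₁| + κ |m - a₂|` for `M = θ̂_max`, `m = θ̂_min`. Squaring and applying the
two-term Cauchy–Schwarz inequality in Sedrakyan's form with weights `τ_max` and `κ² τ_min` gives
the lower bound. Equality holds in both steps at the weighted projection of `(M, m)` onto the
boundary ray `a₁ = κ a₂`, which lies in the region because `κ ≥ 1`.
-/

theorem sq_add_div_le_sq_div_add_sq_div {R : Type*} [Field R] [LinearOrder R]
    [IsStrictOrderedRing R] (x y : R) {a b : R} (ha : 0 < a) (hb : 0 < b) :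
    (x + y) ^ 2 / (a + b) ≤ x ^ 2 / a + y ^ 2 / b := by
  simpa [Fin.sum_univ_two] using
    Finset.univ.sq_sum_div_le_sum_sq_div ![x, y] (g := ![a, b])
      (by simp [Fin.forall_fin_two, ha, hb])

theorem abs_le_mul_abs_of_max_abs_le_mul_min_abs {κ a b : ℝ} (hκ : 0 ≤ κ)
    (h : max |a| |b| ≤ κ * min |a| |b|) : |a| ≤ κ * |b| :=
  calc |a| ≤ max |a| |b| := le_max_left _ _
    _ ≤ κ * min |a| |b| := h
    _ ≤ κ * |b| := mul_le_mul_of_nonneg_left (min_le_right _ _) hκ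

theorem max_abs_le_mul_min_abs_of_eq_mul {κ b : ℝ} (hκ : 1 ≤ κ) (hb : 0 ≤ b) :
    max |κ * b| |b| ≤ κ * min |κ * b| |b| := by
  have hκb : b ≤ κ * b := le_mul_of_one_le_left hb hκ
  rw [abs_of_nonneg hb, abs_of_nonneg (hb.trans hκb), max_eq_left hκb, min_eq_right hκb]

section WeightedDistance

variable {κ τ₁ τ₂ M m : ℝ}

theorem div_le_weighted_dist_sq_of_abs_le_mul_abs (hκ : 0 < κ) (hτ₁ : 0 < τ₁) (hτ₂ : 0 < τ₂)
    (hm : 0 ≤ m) (hMm : 0 ≤ M - κ * m) {a₁ a₂ : ℝ} (ha : |a₁| ≤ κ * |a₂|) :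
    (M - κ * m) ^ 2 / (τ₁ + κ ^ 2 * τ₂) ≤ τ₁⁻¹ * (M - a₁) ^ 2 + τ₂⁻¹ * (m - a₂) ^ 2 := by
  have h₁ : M - |a₁| ≤ |M - a₁| := by linarith [le_abs_self (M - a₁), le_abs_self a₁]
  have h₂ : |a₂| - m ≤ |m - a₂| := by
    simpa [abs_of_nonneg hm, abs_sub_comm] using abs_sub_abs_le_abs_sub a₂ m
  have hdist : M - κ * m ≤ |M - a₁| + κ * |m - a₂| := by
    linarith [mul_le_mul_of_nonneg_left h₂ hκ.le]
  calc (M - κ * m) ^ 2 / (τ₁ + κ ^ 2 * τ₂)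
      ≤ (|M - a₁| + κ * |m - a₂|) ^ 2 / (τ₁ + κ ^ 2 * τ₂) := by gcongr
    _ ≤ |M - a₁| ^ 2 / τ₁ + (κ * |m - a₂|) ^ 2 / (κ ^ 2 * τ₂) :=
      sq_add_div_le_sq_div_add_sq_div _ _ hτ₁ (by positivity)
    _ = τ₁⁻¹ * (M - a₁) ^ 2 + τ₂⁻¹ * (m - a₂) ^ 2 := by
      rw [sq_abs, mul_pow, sq_abs]
      field_simp

/-- The minimiser `(κ s, s)` is chosen so that `M - κ s` and `m - s` are proportional to
`(τ₁, -κ τ₂)`, the equality case of Cauchy–Schwarz. -/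
theorem weighted_dist_sq_at_proj (hτ₁ : τ₁ ≠ 0) (hτ₂ : τ₂ ≠ 0) (hD : τ₁ + κ ^ 2 * τ₂ ≠ 0)
    {s : ℝ} (hs : s = (κ * τ₂ * M + τ₁ * m) / (τ₁ + κ ^ 2 * τ₂)) :
    τ₁⁻¹ * (M - κ * s) ^ 2 + τ₂⁻¹ * (m - s) ^ 2 = (M - κ * m) ^ 2 / (τ₁ + κ ^ 2 * τ₂) := by
  subst hs
  field_simp
  ring

end WeightedDistance

/-- The minimum weighted squared distance from the point
`(θ̂_max, θ̂_min)` (with matched weights `τ_max, τ_min`) to the relative-difference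
null region `{(a₁,a₂) : max(|a₁|,|a₂|) ≤ κ · min(|a₁|,|a₂|)}` equals
`(θ̂_max − κθ̂_min)² / (τ_max + κ²τ_min)`, whenever `θ̂_max − κθ̂_min > 0`. -/
theorem stmt0 (t1 t2 κ τmax τmin : ℝ) (hκ : 1 < κ) (hτ1 : 0 < τmax) (hτ2 : 0 < τmin)
    (h : max |t1| |t2| - κ * min |t1| |t2| > 0) :
    IsLeast {d : ℝ | ∃ a1 a2 : ℝ, max |a1| |a2| ≤ κ * min |a1| |a2| ∧
        d = τmax⁻¹ * (max |t1| |t2| - a1) ^ 2 + τmin⁻¹ * (min |t1| |t2| - a2) ^ 2}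
      ((max |t1| |t2| - κ * min |t1| |t2|) ^ 2 / (τmax + κ ^ 2 * τmin)) := by
  set M := max |t1| |t2|
  set m := min |t1| |t2|
  have hm : 0 ≤ m := le_min (abs_nonneg _) (abs_nonneg _)
  have hκ₀ : 0 < κ := one_pos.trans hκ
  have hs : 0 ≤ (κ * τmin * M + τmax * m) / (τmax + κ ^ 2 * τmin) := by
    have hM : 0 ≤ M := (abs_nonneg t1).trans (le_max_left _ _)
    positivity
  refine ⟨⟨_, _, max_abs_le_mul_min_abs_of_eq_mul hκ.le hs,
    (weighted_dist_sq_at_proj hτ1.ne' hτ2.ne' (by positivity) rfl).symm⟩, ?_⟩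
  rintro _ ⟨a1, a2, ha, rfl⟩
  exact div_le_weighted_dist_sq_of_abs_le_mul_abs hκ₀ hτ1 hτ2 hm h.le
    (abs_le_mul_abs_of_max_abs_le_mul_min_abs hκ₀.le ha)
end

section
/- Let (Z₁, Z₂) be bivariate normal with mean 0 and covariance diag(s₁², s₂²), s₁, s₂ > 0, and let κ > 1. Define T = (max(|Z₁|,|Z₂|) − κ·min(|Z₁|,|Z₂|))/√(s_max² + κ²s_min²), where s_max² is the variance of the coordinate achieving the max and s_min² that achieving the min. Then for every t > 0, P(T > t) = P(W₁₁ > t, W₁₂ > t) + P(W₁₁ < −t, W₁₂ < −t) + P(W₂₁ > t, W₂₂ > t) + P(W₂₁ < −t, W₂₂ < −t), where W₁₁ = (Z₁ − κZ₂)/√(s₁² + κ²s₂²), W₁₂ = (Z₁ + κZ₂)/√(s₁² + κ²s₂²), W₂₁ = (Z₂ − κZ₁)/√(κ²s₁² + s₂²), W₂₂ = (Z₂ + κZ₁)/√(κ²s₁² + s₂²). -/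
/-!
The identity holds pointwise in `ω`. For `d ≥ 0` the pair of wedge conditions
`t < (x ∓ c) / d` is `t < (x - |c|) / d`, and the two sign cases merge into
`t < (|x| - κ|y|) / d`. Since `κ ≥ 1`, this already forces `|y| < |x|`, so the case split on
which coordinate is larger in `T` is automatic, and the four wedges are pairwise disjoint.
-/

open MeasureTheory ProbabilityTheory

section Wedges

variable {x y c a κ t d d₁ d₂ : ℝ}

lemma lt_div_sub_and_lt_div_add_iff (hd : 0 ≤ d) :
    t < (x - c) / d ∧ t < (x + c) / d ↔ t < (x - |c|) / d := by
  rw [← lt_min_iff, min_div_div_right hd, ← sub_neg_eq_add, min_sub_sub_left, ← abs_eq_max_neg]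

lemma div_sub_lt_neg_and_div_add_lt_neg_iff (hd : 0 ≤ d) :
    (x - c) / d < -t ∧ (x + c) / d < -t ↔ t < (-x - |c|) / d := by
  have hneg : ∀ u, u / d < -t ↔ t < -u / d := fun u => by rw [neg_div, lt_neg]
  rw [hneg, hneg, neg_sub', neg_add', and_comm, sub_neg_eq_add, lt_div_sub_and_lt_div_add_iff hd]

lemma lt_div_or_lt_div_iff (hd : 0 ≤ d) :
    t < (x - a) / d ∨ t < (-x - a) / d ↔ t < (|x| - a) / d := by
  rw [← lt_max_iff, max_div_div_right hd, max_sub_sub_right, ← abs_eq_max_neg]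

lemma wedge_or_wedge_iff (hd : 0 ≤ d) (hκ : 0 ≤ κ) :
    (t < (x - κ * y) / d ∧ t < (x + κ * y) / d) ∨ ((x - κ * y) / d < -t ∧ (x + κ * y) / d < -t) ↔
      t < (|x| - κ * |y|) / d := by
  rw [lt_div_sub_and_lt_div_add_iff hd, div_sub_lt_neg_and_div_add_lt_neg_iff hd, abs_mul,
    abs_of_nonneg hκ, lt_div_or_lt_div_iff hd]

lemma abs_lt_abs_of_lt_div (ht : 0 < t) (hd : 0 ≤ d) (hκ : 1 ≤ κ)
    (h : t < (|x| - κ * |y|) / d) : |y| < |x| := by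
  by_contra! hxy
  have hy : |y| ≤ κ * |y| := le_mul_of_one_le_left (abs_nonneg y) hκ
  have : (|x| - κ * |y|) / d ≤ 0 := div_nonpos_of_nonpos_of_nonneg (by linarith) hd
  linarith

lemma lt_max_sub_mul_min_div_iff (ht : 0 < t) (hd₁ : 0 ≤ d₁) (hd₂ : 0 ≤ d₂) (hκ : 1 ≤ κ) :
    t < (max |x| |y| - κ * min |x| |y|) / (if |y| ≤ |x| then d₁ else d₂) ↔
      t < (|x| - κ * |y|) / d₁ ∨ t < (|y| - κ * |x|) / d₂ := by
  split_ifs with h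
  · rw [max_eq_left h, min_eq_right h]
    exact ⟨Or.inl, fun h' =>
      h'.resolve_right fun h₂ => (abs_lt_abs_of_lt_div ht hd₂ hκ h₂).not_ge h⟩
  · push Not at h
    rw [max_eq_right h.le, min_eq_left h.le]
    exact ⟨Or.inr, fun h' =>
      h'.resolve_left fun h₁ => (abs_lt_abs_of_lt_div ht hd₁ hκ h₁).asymm h⟩

end Wedges

lemma measure_wedge_union {Ω : Type*} [MeasurableSpace Ω] (μ : Measure Ω) {f g : Ω → ℝ} {t : ℝ}
    (hf : Measurable f) (hg : Measurable g) (ht : 0 ≤ t) :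
    μ ({ω | t < f ω ∧ t < g ω} ∪ {ω | f ω < -t ∧ g ω < -t}) =
      μ {ω | t < f ω ∧ t < g ω} + μ {ω | f ω < -t ∧ g ω < -t} :=
  measure_union (Set.disjoint_left.2 fun _ h₁ h₂ => by linarith [h₁.1, h₂.1])
    ((measurableSet_lt hf measurable_const).inter (measurableSet_lt hg measurable_const))

theorem stmt4_general {Ω : Type*} [MeasurableSpace Ω] (μ : Measure Ω)
    (Z1 Z2 : Ω → ℝ) (s1 s2 κ t : ℝ) (hκ : 1 < κ)
    (ht : 0 < t) (hm1 : Measurable Z1) (hm2 : Measurable Z2) :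
    μ {ω | t < (max |Z1 ω| |Z2 ω| - κ * min |Z1 ω| |Z2 ω|) /
        Real.sqrt (if |Z2 ω| ≤ |Z1 ω| then s1 ^ 2 + κ ^ 2 * s2 ^ 2
                   else s2 ^ 2 + κ ^ 2 * s1 ^ 2)} =
      μ {ω | t < (Z1 ω - κ * Z2 ω) / Real.sqrt (s1 ^ 2 + κ ^ 2 * s2 ^ 2) ∧
             t < (Z1 ω + κ * Z2 ω) / Real.sqrt (s1 ^ 2 + κ ^ 2 * s2 ^ 2)} +
      μ {ω | (Z1 ω - κ * Z2 ω) / Real.sqrt (s1 ^ 2 + κ ^ 2 * s2 ^ 2) < -t ∧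
             (Z1 ω + κ * Z2 ω) / Real.sqrt (s1 ^ 2 + κ ^ 2 * s2 ^ 2) < -t} +
      μ {ω | t < (Z2 ω - κ * Z1 ω) / Real.sqrt (κ ^ 2 * s1 ^ 2 + s2 ^ 2) ∧
             t < (Z2 ω + κ * Z1 ω) / Real.sqrt (κ ^ 2 * s1 ^ 2 + s2 ^ 2)} +
      μ {ω | (Z2 ω - κ * Z1 ω) / Real.sqrt (κ ^ 2 * s1 ^ 2 + s2 ^ 2) < -t ∧
             (Z2 ω + κ * Z1 ω) / Real.sqrt (κ ^ 2 * s1 ^ 2 + s2 ^ 2) < -t} := by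
  set d₁ := Real.sqrt (s1 ^ 2 + κ ^ 2 * s2 ^ 2)
  set d₂ := Real.sqrt (κ ^ 2 * s1 ^ 2 + s2 ^ 2)
  have hd₁ : 0 ≤ d₁ := Real.sqrt_nonneg _
  have hd₂ : 0 ≤ d₂ := Real.sqrt_nonneg _
  have hκ₀ : 0 ≤ κ := by linarith
  have hT : {ω | t < (max |Z1 ω| |Z2 ω| - κ * min |Z1 ω| |Z2 ω|) /
        Real.sqrt (if |Z2 ω| ≤ |Z1 ω| then s1 ^ 2 + κ ^ 2 * s2 ^ 2 else s2 ^ 2 + κ ^ 2 * s1 ^ 2)} =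
      {ω | t < (|Z1 ω| - κ * |Z2 ω|) / d₁} ∪ {ω | t < (|Z2 ω| - κ * |Z1 ω|) / d₂} := by
    ext ω
    simp only [Set.mem_ofPred_eq, Set.mem_union, apply_ite Real.sqrt, add_comm (s2 ^ 2)]
    exact lt_max_sub_mul_min_div_iff ht hd₁ hd₂ hκ.le
  have hdisj : Disjoint {ω | t < (|Z1 ω| - κ * |Z2 ω|) / d₁} {ω | t < (|Z2 ω| - κ * |Z1 ω|) / d₂} :=
    Set.disjoint_left.2 fun ω h₁ h₂ =>
      (abs_lt_abs_of_lt_div ht hd₁ hκ.le h₁).asymm (abs_lt_abs_of_lt_div ht hd₂ hκ.le h₂)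
  rw [hT, measure_union hdisj (measurableSet_lt measurable_const (by fun_prop))]
  simp only [← wedge_or_wedge_iff hd₁ hκ₀, ← wedge_or_wedge_iff hd₂ hκ₀, Set.ofPred_or]
  rw [measure_wedge_union μ ?_ ?_ ht.le, measure_wedge_union μ ?_ ?_ ht.le, ← add_assoc]
  all_goals fun_prop

/-- For independent centered Gaussians `Z₁ ~ N(0,s₁²)`, `Z₂ ~ N(0,s₂²)`
and `κ > 1`, `t > 0`, the tail probability of
`T = (max(|Z₁|,|Z₂|) − κ·min(|Z₁|,|Z₂|))/√(s_max² + κ²s_min²)` decomposes exactly into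
the four wedge probabilities given by `W₁₁, W₁₂, W₂₁, W₂₂`. -/
theorem stmt4 {Ω : Type*} [MeasurableSpace Ω] (μ : Measure Ω) [IsProbabilityMeasure μ]
    (Z1 Z2 : Ω → ℝ) (s1 s2 κ t : ℝ) (hs1 : 0 < s1) (hs2 : 0 < s2) (hκ : 1 < κ)
    (ht : 0 < t) (hm1 : Measurable Z1) (hm2 : Measurable Z2)
    (hZ1 : μ.map Z1 = gaussianReal 0 (Real.toNNReal (s1 ^ 2)))
    (hZ2 : μ.map Z2 = gaussianReal 0 (Real.toNNReal (s2 ^ 2)))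
    (hindep : IndepFun Z1 Z2 μ) :
    μ {ω | t < (max |Z1 ω| |Z2 ω| - κ * min |Z1 ω| |Z2 ω|) /
        Real.sqrt (if |Z2 ω| ≤ |Z1 ω| then s1 ^ 2 + κ ^ 2 * s2 ^ 2
                   else s2 ^ 2 + κ ^ 2 * s1 ^ 2)} =
      μ {ω | t < (Z1 ω - κ * Z2 ω) / Real.sqrt (s1 ^ 2 + κ ^ 2 * s2 ^ 2) ∧
             t < (Z1 ω + κ * Z2 ω) / Real.sqrt (s1 ^ 2 + κ ^ 2 * s2 ^ 2)} +
      μ {ω | (Z1 ω - κ * Z2 ω) / Real.sqrt (s1 ^ 2 + κ ^ 2 * s2 ^ 2) < -t ∧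
             (Z1 ω + κ * Z2 ω) / Real.sqrt (s1 ^ 2 + κ ^ 2 * s2 ^ 2) < -t} +
      μ {ω | t < (Z2 ω - κ * Z1 ω) / Real.sqrt (κ ^ 2 * s1 ^ 2 + s2 ^ 2) ∧
             t < (Z2 ω + κ * Z1 ω) / Real.sqrt (κ ^ 2 * s1 ^ 2 + s2 ^ 2)} +
      μ {ω | (Z2 ω - κ * Z1 ω) / Real.sqrt (κ ^ 2 * s1 ^ 2 + s2 ^ 2) < -t ∧
             (Z2 ω + κ * Z1 ω) / Real.sqrt (κ ^ 2 * s1 ^ 2 + s2 ^ 2) < -t} :=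
  stmt4_general μ Z1 Z2 s1 s2 κ t hκ ht hm1 hm2
end

section
/- Let κ > 1 and τ₁, τ₂ > 0. For (θ̂₁, θ̂₂) in the alternative region Θ₁^{P/N,κ} (i.e., not in Θ₀^{P/N,κ} = {0 < κ⁻¹θ₁ ≤ θ₂ ≤ κθ₁} ∪ {κθ₁ ≤ θ₂ ≤ κ⁻¹θ₁ < 0}), the minimum over (a₁,a₂) ∈ Θ₀^{P/N,κ} of τ₁⁻¹(θ̂₁ − a₁)² + τ₂⁻¹(θ̂₂ − a₂)² equals min{(θ̂₁ − κθ̂₂)²/(τ₁ + κ²τ₂), (κθ̂₁ − θ̂₂)²/(κ²τ₁ + τ₂)}. -/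
/-!
For `κ ≥ 1`, `Θ₀` is the set of nonzero `a` with `(κa₁ - a₂)(κa₂ - a₁) ≥ 0`, while `θ̂ ∉ Θ₀` forces
`(κθ̂₁ - θ̂₂)(κθ̂₂ - θ̂₁) ≤ 0`. The bound `min{…}` is approached along the two bounding lines
`a₂ = κa₁` and `a₁ = κa₂`, where the weighted distance is minimized at the weighted projection of `θ̂`
(the origin, excluded from `Θ₀`, is only a limit point). Conversely, for `a ∈ Θ₀` one of the linear
forms `L₁ = κa₁ - a₂`, `L₂ = κa₂ - a₁` has `|Lᵢ(θ̂ - a)| ≥ |Lᵢ(θ̂)|`, and Cauchy–Schwarz bounds the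
weighted distance below by `Lᵢ(θ̂ - a)² / ‖Lᵢ‖²`, the dual norm being taken for the weights `τ⁻¹`.
-/

lemma sq_le_sq_sub_or_sq_le_sq_sub {p q p' q' : ℝ} (h : p * q ≤ 0) (h' : 0 ≤ p' * q') :
    p ^ 2 ≤ (p - p') ^ 2 ∨ q ^ 2 ≤ (q - q') ^ 2 := by
  have : p * p' ≤ 0 ∨ q * q' ≤ 0 := by
    by_contra! hpos
    nlinarith [mul_pos hpos.1 hpos.2]
  rcases this with hp | hq
  · exact Or.inl (by nlinarith [sq_nonneg p'])
  · exact Or.inr (by nlinarith [sq_nonneg q'])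

lemma sq_mul_sub_div_le_weighted_sq (κ x y : ℝ) {τ1 τ2 : ℝ} (hτ1 : 0 < τ1) (hτ2 : 0 < τ2) :
    (κ * x - y) ^ 2 / (κ ^ 2 * τ1 + τ2) ≤ τ1⁻¹ * x ^ 2 + τ2⁻¹ * y ^ 2 := by
  rw [div_le_iff₀ (by positivity)]
  have key : (τ1⁻¹ * x ^ 2 + τ2⁻¹ * y ^ 2) * (κ ^ 2 * τ1 + τ2) - (κ * x - y) ^ 2
      = (κ * τ1 * y + τ2 * x) ^ 2 / (τ1 * τ2) := by
    field_simp
    ring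
  have : 0 ≤ (κ * τ1 * y + τ2 * x) ^ 2 / (τ1 * τ2) := by positivity
  linarith

lemma exists_weighted_sq_eq_on_line (κ t1 t2 : ℝ) {τ1 τ2 : ℝ} (hτ1 : 0 < τ1) (hτ2 : 0 < τ2) :
    ∃ u, τ1⁻¹ * (t1 - u) ^ 2 + τ2⁻¹ * (t2 - κ * u) ^ 2 = (κ * t1 - t2) ^ 2 / (κ ^ 2 * τ1 + τ2) := by
  have : κ ^ 2 * τ1 + τ2 ≠ 0 := by positivity
  refine ⟨(τ2 * t1 + κ * τ1 * t2) / (κ ^ 2 * τ1 + τ2), ?_⟩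
  field_simp
  ring

lemma csInf_le_of_continuous_of_forall_ne {S : Set ℝ} (hS : BddBelow S) {f : ℝ → ℝ}
    (hf : Continuous f) (hmem : ∀ u ≠ 0, f u ∈ S) (u : ℝ) : sInf S ≤ f u := by
  have : closure {(0 : ℝ)}ᶜ ⊆ {u | sInf S ≤ f u} :=
    (isClosed_le continuous_const hf).closure_subset_iff.2 fun u hu => csInf_le hS (hmem u hu)
  exact this (by rw [dense_compl_singleton (0 : ℝ) |>.closure_eq]; trivial)

lemma null_region_iff {κ : ℝ} (hκ : 1 ≤ κ) (a1 a2 : ℝ) :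
    ((0 < κ⁻¹ * a1 ∧ κ⁻¹ * a1 ≤ a2 ∧ a2 ≤ κ * a1) ∨
      (κ * a1 ≤ a2 ∧ a2 ≤ κ⁻¹ * a1 ∧ κ⁻¹ * a1 < 0)) ↔
      (a1 ≠ 0 ∨ a2 ≠ 0) ∧ 0 ≤ (κ * a1 - a2) * (κ * a2 - a1) := by
  have hκ0 : 0 < κ := by linarith
  have hpos : 0 < κ⁻¹ * a1 ↔ 0 < a1 := mul_pos_iff_of_pos_left (inv_pos.2 hκ0)
  have hneg : κ⁻¹ * a1 < 0 ↔ a1 < 0 := by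
    rw [← neg_pos, ← mul_neg, mul_pos_iff_of_pos_left (inv_pos.2 hκ0), neg_pos]
  rw [inv_mul_le_iff₀ hκ0, le_inv_mul_iff₀ hκ0, hpos, hneg]
  constructor
  · rintro (⟨h0, h1, h2⟩ | ⟨h1, h2, h0⟩)
    · exact ⟨Or.inl h0.ne', mul_nonneg (by linarith) (by linarith)⟩
    · exact ⟨Or.inl h0.ne, mul_nonneg_of_nonpos_of_nonpos (by linarith) (by linarith)⟩
  · rintro ⟨hne, h⟩
    rcases lt_trichotomy a1 0 with h0 | rfl | h0
    · right
      have := mul_nonneg (sub_nonneg.2 hκ) (neg_nonneg.2 h0.le)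
      rcases mul_nonneg_iff.1 h with ⟨h1, h2⟩ | ⟨h1, h2⟩
      · have := mul_nonneg (sub_nonneg.2 hκ) (by linarith : 0 ≤ -a2)
        exact ⟨by linarith, by linarith, h0⟩
      · exact ⟨by linarith, by linarith, h0⟩
    · refine absurd h (not_le.2 ?_)
      have : a2 ≠ 0 := by simpa using hne
      have : 0 < κ * a2 ^ 2 := by positivity
      linarith
    · left
      have := mul_nonneg (sub_nonneg.2 hκ) h0.le
      rcases mul_nonneg_iff.1 h with ⟨h1, h2⟩ | ⟨h1, h2⟩
      · exact ⟨h0, by linarith, by linarith⟩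
      · have := mul_nonneg (sub_nonneg.2 hκ) (by linarith : 0 ≤ a2)
        exact ⟨h0, by linarith, by linarith⟩

theorem sInf_weighted_sq_dist_eq_min (κ : ℝ) {τ1 τ2 t1 t2 : ℝ} (hτ1 : 0 < τ1) (hτ2 : 0 < τ2)
    (ht : (κ * t1 - t2) * (κ * t2 - t1) ≤ 0) :
    sInf {d : ℝ | ∃ a1 a2 : ℝ, ((a1 ≠ 0 ∨ a2 ≠ 0) ∧ 0 ≤ (κ * a1 - a2) * (κ * a2 - a1)) ∧
        d = τ1⁻¹ * (t1 - a1) ^ 2 + τ2⁻¹ * (t2 - a2) ^ 2} =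
      min ((t1 - κ * t2) ^ 2 / (τ1 + κ ^ 2 * τ2)) ((κ * t1 - t2) ^ 2 / (κ ^ 2 * τ1 + τ2)) := by
  set S := {d : ℝ | ∃ a1 a2 : ℝ, ((a1 ≠ 0 ∨ a2 ≠ 0) ∧ 0 ≤ (κ * a1 - a2) * (κ * a2 - a1)) ∧
        d = τ1⁻¹ * (t1 - a1) ^ 2 + τ2⁻¹ * (t2 - a2) ^ 2}
  have hbdd : BddBelow S := ⟨0, by rintro _ ⟨a1, a2, -, rfl⟩; positivity⟩
  have mem_ray1 (v : ℝ) (hv : v ≠ 0) : τ1⁻¹ * (t1 - κ * v) ^ 2 + τ2⁻¹ * (t2 - v) ^ 2 ∈ S :=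
    ⟨κ * v, v, ⟨Or.inr hv, by rw [sub_self, mul_zero]⟩, rfl⟩
  have mem_ray2 (u : ℝ) (hu : u ≠ 0) : τ1⁻¹ * (t1 - u) ^ 2 + τ2⁻¹ * (t2 - κ * u) ^ 2 ∈ S :=
    ⟨u, κ * u, ⟨Or.inl hu, by rw [sub_self, zero_mul]⟩, rfl⟩
  apply le_antisymm
  · apply le_min
    · obtain ⟨v, hv⟩ := exists_weighted_sq_eq_on_line κ t2 t1 hτ2 hτ1
      calc sInf S ≤ τ1⁻¹ * (t1 - κ * v) ^ 2 + τ2⁻¹ * (t2 - v) ^ 2 :=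
            csInf_le_of_continuous_of_forall_ne hbdd (by fun_prop) mem_ray1 v
        _ = (t1 - κ * t2) ^ 2 / (τ1 + κ ^ 2 * τ2) := by rw [add_comm, hv]; ring
    · obtain ⟨u, hu⟩ := exists_weighted_sq_eq_on_line κ t1 t2 hτ1 hτ2
      calc sInf S ≤ τ1⁻¹ * (t1 - u) ^ 2 + τ2⁻¹ * (t2 - κ * u) ^ 2 :=
            csInf_le_of_continuous_of_forall_ne hbdd (by fun_prop) mem_ray2 u
        _ = _ := hu
  · refine le_csInf ⟨_, mem_ray2 1 one_ne_zero⟩ ?_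
    rintro _ ⟨a1, a2, ⟨-, ha⟩, rfl⟩
    rcases sq_le_sq_sub_or_sq_le_sq_sub ht ha with h | h
    · calc _ ≤ (κ * t1 - t2) ^ 2 / (κ ^ 2 * τ1 + τ2) := min_le_right _ _
        _ ≤ (κ * t1 - t2 - (κ * a1 - a2)) ^ 2 / (κ ^ 2 * τ1 + τ2) := by gcongr
        _ = (κ * (t1 - a1) - (t2 - a2)) ^ 2 / (κ ^ 2 * τ1 + τ2) := by ring
        _ ≤ _ := sq_mul_sub_div_le_weighted_sq κ _ _ hτ1 hτ2
    · calc _ ≤ (t1 - κ * t2) ^ 2 / (τ1 + κ ^ 2 * τ2) := min_le_left _ _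
        _ = (κ * t2 - t1) ^ 2 / (κ ^ 2 * τ2 + τ1) := by ring
        _ ≤ (κ * t2 - t1 - (κ * a2 - a1)) ^ 2 / (κ ^ 2 * τ2 + τ1) := by gcongr
        _ = (κ * (t2 - a2) - (t1 - a1)) ^ 2 / (κ ^ 2 * τ2 + τ1) := by ring
        _ ≤ _ := (sq_mul_sub_div_le_weighted_sq κ _ _ hτ2 hτ1).trans_eq (add_comm _ _)

/-- For `θ̂` in the omnibus alternative region, the minimum weighted
squared distance to `Θ₀^{P/N,κ} = {0 < κ⁻¹θ₁ ≤ θ₂ ≤ κθ₁} ∪ {κθ₁ ≤ θ₂ ≤ κ⁻¹θ₁ < 0}`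
equals `min{(θ̂₁ − κθ̂₂)²/(τ₁ + κ²τ₂), (κθ̂₁ − θ̂₂)²/(κ²τ₁ + τ₂)}`. -/
theorem stmt6 (κ τ1 τ2 t1 t2 : ℝ) (hκ : 1 < κ) (hτ1 : 0 < τ1) (hτ2 : 0 < τ2)
    (halt : ¬((0 < κ⁻¹ * t1 ∧ κ⁻¹ * t1 ≤ t2 ∧ t2 ≤ κ * t1) ∨
              (κ * t1 ≤ t2 ∧ t2 ≤ κ⁻¹ * t1 ∧ κ⁻¹ * t1 < 0))) :
    sInf {d : ℝ | ∃ a1 a2 : ℝ,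
        ((0 < κ⁻¹ * a1 ∧ κ⁻¹ * a1 ≤ a2 ∧ a2 ≤ κ * a1) ∨
         (κ * a1 ≤ a2 ∧ a2 ≤ κ⁻¹ * a1 ∧ κ⁻¹ * a1 < 0)) ∧
        d = τ1⁻¹ * (t1 - a1) ^ 2 + τ2⁻¹ * (t2 - a2) ^ 2} =
      min ((t1 - κ * t2) ^ 2 / (τ1 + κ ^ 2 * τ2)) ((κ * t1 - t2) ^ 2 / (κ ^ 2 * τ1 + τ2)) := by
  rw [null_region_iff hκ.le] at halt
  have ht : (κ * t1 - t2) * (κ * t2 - t1) ≤ 0 := by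
    by_contra! h
    refine halt ⟨?_, h.le⟩
    by_contra! h0
    simp [h0.1, h0.2] at h
  simp only [null_region_iff hκ.le]
  exact sInf_weighted_sq_dist_eq_min κ hτ1 hτ2 ht
end
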